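/- arXiv:1802.02628 — 4 statements merged into one kernel-verified Lean document; each statement's English description precedes it below -/
import Mathlib

section
/- Let X ∈ ℝ^{n×n} have all entries strictly positive, and let α, β ∈ ℝⁿ. Then for every Z ∈ ℝ^{n×n} with Z𝟙 = 0 and Zᵀ𝟙 = 0, the Fisher inner product ⟨(α𝟙ᵀ + 𝟙βᵀ) ⊙ X, Z⟩_X vanishes; that is, matrices of the form (α𝟙ᵀ + 𝟙βᵀ) ⊙ X are orthogonal, in the Fisher metric at X, to the tangent space of the doubly stochastic multinomial manifold. -/
open Matrix

section FisherInner

variable {m n R : Type*} [Fintype m] [Fintype n]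

def fisherInner [DivisionRing R] (X ξ η : Matrix m n R) : R :=
  ∑ i, ∑ j, ξ i j * η i j / X i j

theorem fisherInner_hadamard_left [Field R] {X : Matrix m n R} (hX : ∀ i j, X i j ≠ 0)
    (A Z : Matrix m n R) :
    fisherInner X (A ⊙ X) Z = ∑ i, ∑ j, A i j * Z i j := by
  refine Finset.sum_congr rfl fun i _ => Finset.sum_congr rfl fun j _ => ?_
  rw [hadamard_apply, mul_right_comm, mul_div_cancel_right₀ _ (hX i j)]

end FisherInner

theorem Matrix.sum_sum_vecMulVec_mul {m n R : Type*} [Fintype m] [Fintype n] [CommSemiring R]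
    (u : m → R) (v : n → R) (Z : Matrix m n R) :
    ∑ i, ∑ j, vecMulVec u v i j * Z i j = u ⬝ᵥ (Z *ᵥ v) := by
  simp only [vecMulVec_apply, dotProduct, mulVec, Finset.mul_sum]
  exact Finset.sum_congr rfl fun i _ => Finset.sum_congr rfl fun j _ => by ring

/-- Matrices of the form `(α𝟙ᵀ + 𝟙βᵀ) ⊙ X` are orthogonal, in the Fisher
metric at an entrywise positive `X`, to the tangent space
`{Z : Z𝟙 = 0, Zᵀ𝟙 = 0}` of the doubly stochastic multinomial manifold. -/
theorem orth_complement_doubly_stochastic (n : ℕ)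
    (X : Matrix (Fin n) (Fin n) ℝ) (hX : ∀ i j, 0 < X i j)
    (α β : Fin n → ℝ)
    (Z : Matrix (Fin n) (Fin n) ℝ)
    (hZ1 : Z.mulVec (fun _ => (1 : ℝ)) = 0)
    (hZ2 : Zᵀ.mulVec (fun _ => (1 : ℝ)) = 0) :
    ∑ i, ∑ j,
      ((Matrix.hadamard
          (Matrix.vecMulVec α (fun _ => (1 : ℝ)) +
            Matrix.vecMulVec (fun _ => (1 : ℝ)) β) X) i j * Z i j) / X i j
      = 0 := by
  change fisherInner X _ Z = 0
  rw [fisherInner_hadamard_left fun i j => (hX i j).ne']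
  simp only [Matrix.add_apply, add_mul, Finset.sum_add_distrib, sum_sum_vecMulVec_mul]
  rw [hZ1, dotProduct_mulVec, ← mulVec_transpose, hZ2, dotProduct_zero, zero_dotProduct,
    add_zero]
end

section
/- Let X ∈ ℝ^{n×n} be symmetric with all entries strictly positive, and let α ∈ ℝⁿ. Then for every symmetric Z ∈ ℝ^{n×n} with Z𝟙 = 0, the Fisher inner product ⟨(α𝟙ᵀ + 𝟙αᵀ) ⊙ X, Z⟩_X vanishes; that is, symmetric matrices of the form (α𝟙ᵀ + 𝟙αᵀ) ⊙ X are orthogonal, in the Fisher metric at X, to the tangent space of the symmetric multinomial manifold. -/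
open Matrix

/-!
Dividing by the entries of `X` undoes the Hadamard product, so the Fisher inner product
reduces to `∑ᵢⱼ (αᵢ + αⱼ) Zᵢⱼ = α ⬝ᵥ Z𝟙 + 𝟙ᵀZ ⬝ᵥ α`. Both terms vanish: `Z𝟙 = 0` by
assumption, and `𝟙ᵀZ = (Zᵀ𝟙)ᵀ = (Z𝟙)ᵀ` by symmetry.
-/

namespace Matrix

variable {m n R : Type*} [Fintype m] [Fintype n]

theorem sum_sum_hadamard_mul_div [Field R] (A X Z : Matrix m n R) (hX : ∀ i j, X i j ≠ 0) :
    ∑ i, ∑ j, (A ⊙ X) i j * Z i j / X i j = ∑ i, ∑ j, A i j * Z i j := by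
  refine Finset.sum_congr rfl fun i _ => Finset.sum_congr rfl fun j _ => ?_
  rw [hadamard_apply, mul_right_comm, mul_div_assoc, div_self (hX i j), mul_one]

theorem sum_sum_vecMulVec_mul_s3 [CommSemiring R] (u : m → R) (v : n → R) (Z : Matrix m n R) :
    ∑ i, ∑ j, vecMulVec u v i j * Z i j = u ⬝ᵥ (Z *ᵥ v) := by
  simp only [vecMulVec_apply, dotProduct, mulVec, Finset.mul_sum]
  exact Finset.sum_congr rfl fun i _ => Finset.sum_congr rfl fun j _ => by ring

end Matrix

theorem orth_complement_symmetric_multinomial_general (n : ℕ)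
    (X : Matrix (Fin n) (Fin n) ℝ) (hX : ∀ i j, 0 < X i j)
    (α : Fin n → ℝ)
    (Z : Matrix (Fin n) (Fin n) ℝ) (hZsym : Z = Zᵀ)
    (hZ1 : Z.mulVec (fun _ => (1 : ℝ)) = 0) :
    ∑ i, ∑ j,
      ((Matrix.hadamard
          (Matrix.vecMulVec α (fun _ => (1 : ℝ)) +
            Matrix.vecMulVec (fun _ => (1 : ℝ)) α) X) i j * Z i j) / X i j
      = 0 := by
  have hvecMul : (fun _ => (1 : ℝ)) ᵥ* Z = 0 := by rw [← mulVec_transpose, ← hZsym, hZ1]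
  rw [sum_sum_hadamard_mul_div _ _ _ fun i j => (hX i j).ne']
  simp only [Matrix.add_apply, add_mul, Finset.sum_add_distrib, sum_sum_vecMulVec_mul_s3,
    dotProduct_mulVec, hZ1, hvecMul, dotProduct_zero, zero_dotProduct, add_zero]

/-- Symmetric matrices of the form `(α𝟙ᵀ + 𝟙αᵀ) ⊙ X` are orthogonal, in the
Fisher metric at a symmetric entrywise positive `X`, to the tangent space
`{Z symmetric : Z𝟙 = 0}` of the symmetric multinomial manifold. -/
theorem orth_complement_symmetric_multinomial (n : ℕ)
    (X : Matrix (Fin n) (Fin n) ℝ) (hXsym : X = Xᵀ) (hX : ∀ i j, 0 < X i j)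
    (α : Fin n → ℝ)
    (Z : Matrix (Fin n) (Fin n) ℝ) (hZsym : Z = Zᵀ)
    (hZ1 : Z.mulVec (fun _ => (1 : ℝ)) = 0) :
    ∑ i, ∑ j,
      ((Matrix.hadamard
          (Matrix.vecMulVec α (fun _ => (1 : ℝ)) +
            Matrix.vecMulVec (fun _ => (1 : ℝ)) α) X) i j * Z i j) / X i j
      = 0 :=
  orth_complement_symmetric_multinomial_general n X hX α Z hZsym hZ1
end

section
/- Let X ∈ 𝔻ℙ_n. If α, β ∈ ℝⁿ satisfy α + Xβ = 0 and Xᵀα + β = 0, then there exists a scalar c ∈ ℝ such that α = c𝟙 and β = −c𝟙. In other words, the null space of the 2n×2n block matrix [[I, X], [Xᵀ, I]] is spanned by the vector (𝟙, −𝟙). -/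
/-!
Eliminating `β = -Xᵀα` turns the two equations into `(X Xᵀ) α = α`. The matrix `X Xᵀ` again has
positive entries and unit row sums, so by the discrete maximum principle its only fixed vectors
are constant; hence `α = c𝟙`, and then `β = -c Xᵀ𝟙 = -c𝟙`.
-/

namespace Matrix

variable {ι : Type*} [Fintype ι]

/-- Maximum principle: `0 = v i₀ - (Y *ᵥ v) i₀ = ∑ k, Y i₀ k * (v i₀ - v k)` is a sum of
nonnegative terms. -/
lemma apply_eq_of_mulVec_eq_self_of_isMax {Y : Matrix ι ι ℝ} {v : ι → ℝ}
    (hrow : Y *ᵥ 1 = 1) (hv : Y *ᵥ v = v) {i₀ : ι} (hmax : ∀ j, v j ≤ v i₀)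
    (hnonneg : ∀ j, 0 ≤ Y i₀ j) {j : ι} (hpos : 0 < Y i₀ j) : v j = v i₀ := by
  have hsum : ∑ k, Y i₀ k * (v i₀ - v k) = 0 := by
    have hY : ∑ k, Y i₀ k = 1 := by simpa [mulVec, dotProduct] using congrFun hrow i₀
    have hYv : ∑ k, Y i₀ k * v k = v i₀ := by simpa [mulVec, dotProduct] using congrFun hv i₀
    simp only [mul_sub, Finset.sum_sub_distrib, ← Finset.sum_mul, hY, hYv, one_mul, sub_self]
  have hterm := (Finset.sum_eq_zero_iff_of_nonneg fun k _ =>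
    mul_nonneg (hnonneg k) (sub_nonneg.2 (hmax k))).1 hsum j (Finset.mem_univ j)
  linarith [(mul_eq_zero.1 hterm).resolve_left hpos.ne']

lemma exists_eq_const_of_mulVec_eq_self {Y : Matrix ι ι ℝ} (hpos : ∀ i j, 0 < Y i j)
    (hrow : Y *ᵥ 1 = 1) {v : ι → ℝ} (hv : Y *ᵥ v = v) : ∃ c, v = fun _ => c := by
  cases isEmpty_or_nonempty ι
  · exact ⟨0, funext isEmptyElim⟩
  obtain ⟨i₀, hmax⟩ := Finite.exists_max v
  exact ⟨v i₀, funext fun j => apply_eq_of_mulVec_eq_self_of_isMax hrow hv hmax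
    (fun k => (hpos i₀ k).le) (hpos i₀ j)⟩

lemma mul_transpose_apply_pos {X : Matrix ι ι ℝ} (hpos : ∀ i j, 0 < X i j) (i j : ι) :
    0 < (X * Xᵀ) i j :=
  Finset.sum_pos (fun k _ => mul_pos (hpos i k) (hpos j k)) ⟨i, Finset.mem_univ i⟩

end Matrix

open Matrix

/-- For `X ∈ 𝔻ℙ_n`, the null space of the block matrix `[[I, X], [Xᵀ, I]]`
is spanned by `(𝟙, −𝟙)`: if `α + Xβ = 0` and `Xᵀα + β = 0` then
`α = c𝟙` and `β = −c𝟙` for some scalar `c`. -/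
theorem null_space_block_matrix_doubly_stochastic (n : ℕ)
    (X : Matrix (Fin n) (Fin n) ℝ)
    (hXpos : ∀ i j, 0 < X i j)
    (hXrow : X.mulVec (fun _ => (1 : ℝ)) = fun _ => (1 : ℝ))
    (hXcol : Xᵀ.mulVec (fun _ => (1 : ℝ)) = fun _ => (1 : ℝ))
    (α β : Fin n → ℝ)
    (h1 : α + X.mulVec β = 0)
    (h2 : Xᵀ.mulVec α + β = 0) :
    ∃ c : ℝ, α = (fun _ => c) ∧ β = (fun _ => -c) := by
  have hβ : β = -(Xᵀ *ᵥ α) := eq_neg_of_add_eq_zero_right h2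
  have hα : α = -(X *ᵥ β) := eq_neg_of_add_eq_zero_left h1
  have hrow : (X * Xᵀ) *ᵥ 1 = 1 := by
    rw [← mulVec_mulVec, Pi.one_def, hXcol, hXrow]
  have hfix : (X * Xᵀ) *ᵥ α = α := by
    rw [← mulVec_mulVec, ← neg_neg (Xᵀ *ᵥ α), ← hβ, mulVec_neg, ← hα]
  obtain ⟨c, rfl⟩ := exists_eq_const_of_mulVec_eq_self (mul_transpose_apply_pos hXpos) hrow hfix
  refine ⟨c, rfl, ?_⟩
  have hconst : (fun _ : Fin n => c) = c • (1 : Fin n → ℝ) := by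
    funext; simp
  rw [hβ, hconst, mulVec_smul, Pi.one_def, hXcol]
  funext; simp
end

section
/- Let X ∈ 𝔻ℙ_n. Then for every Z ∈ ℝ^{n×n} the linear system Z𝟙 = α + Xβ, Zᵀ𝟙 = Xᵀα + β admits at least one solution (α, β) ∈ ℝⁿ × ℝⁿ; equivalently, the vector (Z𝟙, Zᵀ𝟙) lies in the range of the symmetric block matrix [[I, X], [Xᵀ, I]]. -/
/-!
Putting `α = Z𝟙 - Xβ` reduces the system to `(I - XᵀX) β = Zᵀ𝟙 - XᵀZ𝟙`. The matrix `I - XᵀX` is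
symmetric, so this is solvable iff the right-hand side is orthogonal to its kernel. A fixed vector
of the positive stochastic matrix `XᵀX` attains its maximum at every index (maximum principle), so
the kernel consists of the constant vectors; and the right-hand side has coordinate sum zero, as
both `Zᵀ𝟙` and `XᵀZ𝟙` sum to the total sum of `Z`.
-/

open Matrix

theorem Matrix.exists_mulVec_eq_of_forall_conjTranspose_mulVec_eq_zero {𝕜 m n : Type*} [RCLike 𝕜]
    [Fintype m] [DecidableEq m] [Fintype n] [DecidableEq n] (A : Matrix m n 𝕜) (y : m → 𝕜)
    (hy : ∀ v, Aᴴ *ᵥ v = 0 → star v ⬝ᵥ y = 0) : ∃ x, A *ᵥ x = y := by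
  have hmem : WithLp.toLp 2 y ∈ (LinearMap.ker (toEuclideanLin Aᴴ))ᗮ := by
    intro v hv
    rw [EuclideanSpace.inner_eq_star_dotProduct, WithLp.ofLp_toLp, dotProduct_comm]
    exact hy v.ofLp (by simpa using congrArg WithLp.ofLp hv)
  rw [LinearMap.orthogonal_ker, ← toEuclideanLin_conjTranspose_eq_adjoint,
    conjTranspose_conjTranspose] at hmem
  obtain ⟨x, hx⟩ := hmem
  exact ⟨x, by simpa using congrArg WithLp.ofLp hx⟩

theorem Matrix.exists_eq_smul_one_of_mulVec_eq_self {n R : Type*} [Fintype n] [CommRing R]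
    [LinearOrder R] [IsStrictOrderedRing R] {A : Matrix n n R} (hpos : ∀ i j, 0 < A i j)
    (hrow : A *ᵥ 1 = 1) {v : n → R} (hv : A *ᵥ v = v) : ∃ t : R, v = t • 1 := by
  cases isEmpty_or_nonempty n
  · exact ⟨0, Subsingleton.elim _ _⟩
  obtain ⟨i₀, hmax⟩ := Finite.exists_max v
  have hsum : ∑ k, A i₀ k * (v i₀ - v k) = 0 := by
    have hrow₀ : ∑ k, A i₀ k = 1 := by simpa [mulVec, dotProduct] using congrFun hrow i₀
    have hv₀ : ∑ k, A i₀ k * v k = v i₀ := by simpa [mulVec, dotProduct] using congrFun hv i₀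
    simp only [mul_sub, Finset.sum_sub_distrib, ← Finset.sum_mul, hrow₀, hv₀, one_mul, sub_self]
  have hterm := (Finset.sum_eq_zero_iff_of_nonneg fun k _ ↦
    mul_nonneg (hpos i₀ k).le (sub_nonneg.mpr (hmax k))).mp hsum
  refine ⟨v i₀, funext fun k ↦ ?_⟩
  have := (mul_eq_zero.mp (hterm k (Finset.mem_univ k))).resolve_left (hpos i₀ k).ne'
  simpa [sub_eq_zero, eq_comm] using this

/-- For `X ∈ 𝔻ℙ_n` and any `Z ∈ ℝ^{n×n}`, the linear system
`Z𝟙 = α + Xβ`, `Zᵀ𝟙 = Xᵀα + β` admits at least one solution `(α, β)`;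
equivalently, `(Z𝟙, Zᵀ𝟙)` lies in the range of `[[I, X], [Xᵀ, I]]`. -/
theorem block_system_solvable_doubly_stochastic (n : ℕ)
    (X : Matrix (Fin n) (Fin n) ℝ)
    (hXpos : ∀ i j, 0 < X i j)
    (hXrow : X.mulVec (fun _ => (1 : ℝ)) = fun _ => (1 : ℝ))
    (hXcol : Xᵀ.mulVec (fun _ => (1 : ℝ)) = fun _ => (1 : ℝ))
    (Z : Matrix (Fin n) (Fin n) ℝ) :
    ∃ α β : Fin n → ℝ,
      Z.mulVec (fun _ => (1 : ℝ)) = α + X.mulVec β ∧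
      Zᵀ.mulVec (fun _ => (1 : ℝ)) = Xᵀ.mulVec α + β := by
  simp only [← Pi.one_def] at hXrow hXcol ⊢
  have hker : ∀ v, (1 - Xᵀ * X)ᴴ *ᵥ v = 0 → star v ⬝ᵥ (Zᵀ *ᵥ 1 - Xᵀ *ᵥ (Z *ᵥ 1)) = 0 := by
    intro v hv
    have hpos : ∀ i j, 0 < (Xᵀ * X) i j := fun i j ↦
      Finset.sum_pos (fun k _ ↦ mul_pos (hXpos k i) (hXpos k j)) ⟨i, Finset.mem_univ i⟩
    have hrow : (Xᵀ * X) *ᵥ 1 = 1 := by rw [← mulVec_mulVec, hXrow, hXcol]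
    have hfix : (Xᵀ * X) *ᵥ v = v := by
      simpa [conjTranspose_eq_transpose_of_trivial, sub_mulVec, sub_eq_zero, eq_comm] using hv
    obtain ⟨t, rfl⟩ := exists_eq_smul_one_of_mulVec_eq_self hpos hrow hfix
    have hsum : 1 ⬝ᵥ (Zᵀ *ᵥ 1) = 1 ⬝ᵥ (Xᵀ *ᵥ (Z *ᵥ 1)) := by
      rw [dotProduct_mulVec, dotProduct_mulVec, vecMul_transpose, vecMul_transpose, hXrow,
        dotProduct_comm]
    simp [smul_dotProduct, dotProduct_sub, hsum]
  obtain ⟨β, hβ⟩ := (1 - Xᵀ * X).exists_mulVec_eq_of_forall_conjTranspose_mulVec_eq_zero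
    _ hker
  refine ⟨Z *ᵥ 1 - X *ᵥ β, β, by abel, ?_⟩
  rw [sub_mulVec, one_mulVec, ← mulVec_mulVec] at hβ
  rw [mulVec_sub]
  linear_combination -hβ
end
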